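/- Let F(x,y,z,t) ∈ C[x,y,z,t] be a nonzero polynomial satisfying: (1) F is irreducible and F ∉ C[z,t]; (2) the set of (z0,t0) ∈ C^2 such that F(x,y,z0,t0) is reducible in C[x,y] is finite; (3) for each (z0,t0) ∈ C^2, the set of (z1,t1) ∈ C^2 for which there exists λ ∈ C with F(x,y,z0,t0) = λ·F(x,y,z1,t1) as polynomials in C[x,y] is finite. Then F is non-Cartesian. -/

import Mathlib

/-! If `F = G(x,y)·F₁ + H(z,t)·F₂` with `G`, `H` non-constant, then along the zero curve of `H`,
which is infinite, the specialization `F(x,y,z₀,t₀)` is `G · F₁(x,y,z₀,t₀)`. Away from the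
finitely many reducible specializations this forces `F(x,y,z₀,t₀)` to be associated to `G`, so
infinitely many specializations are scalar multiples of a single one. -/

open MvPolynomial

/-- A polynomial `P ∈ ℂ[x,y,z,t]` is Cartesian if `P = G(x,y)·F1 + H(z,t)·F2`
with `G`, `H` non-constant. -/
def IsCartesian (P : MvPolynomial (Fin 4) ℂ) : Prop :=
  ∃ (G H : MvPolynomial (Fin 2) ℂ) (F1 F2 : MvPolynomial (Fin 4) ℂ),
    (∀ c : ℂ, G ≠ MvPolynomial.C c) ∧ (∀ c : ℂ, H ≠ MvPolynomial.C c) ∧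
    P = MvPolynomial.rename (![0, 1] : Fin 2 → Fin 4) G * F1
        + MvPolynomial.rename (![2, 3] : Fin 2 → Fin 4) H * F2

/-- Substituting `(z,t) := (z0,t0)` in `F(x,y,z,t)`, producing a polynomial in `ℂ[x,y]`. -/
noncomputable def specializeZT (p : ℂ × ℂ) (F : MvPolynomial (Fin 4) ℂ) :
    MvPolynomial (Fin 2) ℂ :=
  MvPolynomial.aeval
    (![MvPolynomial.X 0, MvPolynomial.X 1, MvPolynomial.C p.1, MvPolynomial.C p.2]) F

namespace Polynomial

variable {K : Type*} [Field K] [IsAlgClosed K]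

theorem eq_C_of_forall_not_isRoot {p : K[X]} (hp : ∀ x, ¬ p.IsRoot x) : p = C (p.coeff 0) :=
  eq_C_of_degree_eq_zero <| by_contra fun h ↦ (IsAlgClosed.exists_root p h).elim hp

end Polynomial

namespace MvPolynomial

theorem polynomial_eval_aeval_vecCons {R : Type*} [CommSemiring R] (H : MvPolynomial (Fin 2) R)
    (u v : Polynomial R) (x : R) :
    (aeval ![u, v] H).eval x = eval ![u.eval x, v.eval x] H := by
  rw [aeval_def, polynomial_eval_eval₂, Polynomial.algebraMap_eq,
    show (Polynomial.evalRingHom x).comp Polynomial.C = RingHom.id R from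
      RingHom.ext fun _ ↦ Polynomial.eval_C]
  congr 1
  ext i
  fin_cases i <;> rfl

theorem exists_eq_C_mul_of_associated {R σ : Type*} [CommRing R] [IsReduced R]
    {A B : MvPolynomial σ R} (h : Associated A B) : ∃ c : R, B = C c * A := by
  obtain ⟨u, rfl⟩ := h
  obtain ⟨c, -, hc⟩ := isUnit_iff_eq_C_of_isReduced.mp u.isUnit
  exact ⟨c, by rw [hc, mul_comm]⟩

/- If the zero set `Z` were finite, then on each line `y = a` missing `Z` the slice `H(·, a)`
would have no root, hence be constant; so `H(x, y) = H(0, y)`, and `H(0, ·)` cannot have a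
root either, which forces `H` to be constant. -/
theorem infinite_zeroSet_of_forall_ne_C {K : Type*} [Field K] [IsAlgClosed K]
    {H : MvPolynomial (Fin 2) K} (hH : ∀ c, H ≠ C c) :
    {p : K × K | eval ![p.1, p.2] H = 0}.Infinite := by
  set Z := {p : K × K | eval ![p.1, p.2] H = 0}
  intro hZ
  have hslice : ∀ a ∉ Prod.snd '' Z, ∀ x, eval ![x, a] H = eval ![0, a] H := by
    intro a ha x
    have hroot : ∀ x, ¬ (aeval ![Polynomial.X, Polynomial.C a] H).IsRoot x := fun x hx ↦
      ha ⟨(x, a), by simpa [Z, polynomial_eval_aeval_vecCons] using hx, rfl⟩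
    have h := Polynomial.eq_C_of_forall_not_isRoot hroot
    have h0 := congrArg (Polynomial.eval 0) h
    have hx := congrArg (Polynomial.eval x) h
    simp only [polynomial_eval_aeval_vecCons, Polynomial.eval_X, Polynomial.eval_C] at h0 hx
    rw [hx, h0]
  have hconst : ∀ x a, eval ![x, a] H = eval ![0, a] H := by
    intro x
    set q := aeval ![Polynomial.C x, Polynomial.X] H - aeval ![Polynomial.C 0, Polynomial.X] H
    have hq : q = 0 := q.eq_zero_of_infinite_isRoot <| (hZ.image Prod.snd).infinite_compl.mono
      fun a ha ↦ by simp [q, polynomial_eval_aeval_vecCons, hslice a ha x]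
    intro a
    simpa [q, polynomial_eval_aeval_vecCons, sub_eq_zero] using congrArg (Polynomial.eval a) hq
  set g := aeval ![Polynomial.C (0 : K), Polynomial.X] H
  have hroot : ∀ a, ¬ g.IsRoot a := fun a ha ↦
    Set.infinite_of_injective_forall_mem (s := Z) (f := fun x ↦ (x, a))
      (fun x y h ↦ congrArg Prod.fst h)
      (fun x ↦ by simpa [Z, g, hconst x a, polynomial_eval_aeval_vecCons] using ha) hZ
  refine hH (g.coeff 0) (MvPolynomial.funext fun v ↦ ?_)
  have hv : v = ![v 0, v 1] := by ext i; fin_cases i <;> rfl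
  have h := congrArg (Polynomial.eval (v 1)) (Polynomial.eq_C_of_forall_not_isRoot hroot)
  simp only [g, polynomial_eval_aeval_vecCons, Polynomial.eval_C, Polynomial.eval_X] at h
  rw [eval_C, hv, hconst, h]

end MvPolynomial

theorem specializeZT_rename_xy (p : ℂ × ℂ) (G : MvPolynomial (Fin 2) ℂ) :
    specializeZT p (rename ![0, 1] G) = G := by
  rw [specializeZT, aeval_rename]
  convert aeval_X_left_apply G
  ext i
  fin_cases i <;> rfl

theorem specializeZT_rename_zt (p : ℂ × ℂ) (H : MvPolynomial (Fin 2) ℂ) :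
    specializeZT p (rename ![2, 3] H) = C (eval ![p.1, p.2] H) := by
  rw [specializeZT, aeval_rename, aeval_def, eval, coe_eval₂Hom, eval₂_comp_left]
  congr 1
  ext i
  fin_cases i <;> rfl

theorem specializeZT_cartesian (p : ℂ × ℂ) (G H : MvPolynomial (Fin 2) ℂ)
    (F₁ F₂ : MvPolynomial (Fin 4) ℂ) :
    specializeZT p (rename ![0, 1] G * F₁ + rename ![2, 3] H * F₂) =
      G * specializeZT p F₁ + C (eval ![p.1, p.2] H) * specializeZT p F₂ := by
  have hadd (a b) : specializeZT p (a + b) = specializeZT p a + specializeZT p b :=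
    map_add (aeval _) a b
  have hmul (a b) : specializeZT p (a * b) = specializeZT p a * specializeZT p b :=
    map_mul (aeval _) a b
  rw [hadd, hmul, hmul, specializeZT_rename_xy, specializeZT_rename_zt]

theorem associated_specializeZT_of_eval_eq_zero {G H : MvPolynomial (Fin 2) ℂ}
    {F₁ F₂ : MvPolynomial (Fin 4) ℂ} (hG : ∀ c, G ≠ C c) {p : ℂ × ℂ}
    (hp : eval ![p.1, p.2] H = 0)
    (hirr : Irreducible (specializeZT p (rename ![0, 1] G * F₁ + rename ![2, 3] H * F₂))) :
    Associated (specializeZT p (rename ![0, 1] G * F₁ + rename ![2, 3] H * F₂)) G := by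
  have hdvd : G ∣ specializeZT p (rename ![0, 1] G * F₁ + rename ![2, 3] H * F₂) := by
    rw [specializeZT_cartesian, hp, C_0, zero_mul, add_zero]
    exact dvd_mul_right _ _
  refine (hirr.dvd_iff.mp hdvd).resolve_left fun hunit ↦ ?_
  obtain ⟨c, -, rfl⟩ := isUnit_iff_eq_C_of_isReduced.mp hunit
  exact hG c rfl

theorem non_cartesian_of_sufficient_conditions_general
    (F : MvPolynomial (Fin 4) ℂ)
    (h2 : {p : ℂ × ℂ | ¬ Irreducible (specializeZT p F)}.Finite)
    (h3 : ∀ p : ℂ × ℂ,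
      {q : ℂ × ℂ | ∃ lam : ℂ,
        specializeZT p F = MvPolynomial.C lam * specializeZT q F}.Finite) :
    ¬ IsCartesian F := by
  rintro ⟨G, H, F₁, F₂, hG, hH, rfl⟩
  set S := {p : ℂ × ℂ | eval ![p.1, p.2] H = 0} \
    {p | ¬ Irreducible (specializeZT p (rename ![0, 1] G * F₁ + rename ![2, 3] H * F₂))}
  have hS : S.Infinite := (infinite_zeroSet_of_forall_ne_C hH).sdiff h2
  have hassoc : ∀ p ∈ S, Associated (specializeZT p _) G := fun p ⟨hp, hirr⟩ ↦
    associated_specializeZT_of_eval_eq_zero hG hp (not_not.mp hirr)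
  obtain ⟨p₀, hp₀⟩ := hS.nonempty
  exact hS <| (h3 p₀).subset fun q hq ↦
    exists_eq_C_mul_of_associated ((hassoc q hq).trans (hassoc p₀ hp₀).symm)

/-- Sufficient criterion for being non-Cartesian (Theorem 3.1):
a nonzero irreducible `F ∉ ℂ[z,t]` such that only finitely many specializations
`F(x,y,z0,t0)` are reducible, and for each `(z0,t0)` only finitely many `(z1,t1)` give a
scalar multiple of the same specialization, is non-Cartesian. -/
theorem non_cartesian_of_sufficient_conditions
    (F : MvPolynomial (Fin 4) ℂ) (hF0 : F ≠ 0)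
    (h1irr : Irreducible F)
    (h1zt : ¬ ∃ W : MvPolynomial (Fin 2) ℂ,
      F = MvPolynomial.rename (![2, 3] : Fin 2 → Fin 4) W)
    (h2 : {p : ℂ × ℂ | ¬ Irreducible (specializeZT p F)}.Finite)
    (h3 : ∀ p : ℂ × ℂ,
      {q : ℂ × ℂ | ∃ lam : ℂ,
        specializeZT p F = MvPolynomial.C lam * specializeZT q F}.Finite) :
    ¬ IsCartesian F :=
  non_cartesian_of_sufficient_conditions_general F h2 h3
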